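/- arXiv:1802.08934 — 4 statements merged into one kernel-verified Lean document; each statement's English description precedes it below -/
import Mathlib

section
/- Let arc be the arcsine distribution on [-π, π], with density f(x) = 1/(π√(π² - x²)) on (-π, π). Then D_arc(c) := ∫|y - c| d arc(y) = (2/π)(c · arcsin(c/π) + √(π² - c²)) for all c ∈ [-π, π]. -/
open MeasureTheory Real

/-- For the arcsine distribution on `[-π, π]`, with density `1 / (π √(π² - y²))`,
the function `D(c) = ∫ |y - c| d arc(y)` is given by the explicit formula
`(2/π) (c arcsin(c/π) + √(π² - c²))` for `c ∈ [-π, π]`. -/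
theorem arcsine_abs_moment (c : ℝ) (hc : c ∈ Set.Icc (-π) π) :
    ∫ y in Set.Ioo (-π) π, |y - c| / (π * Real.sqrt (π ^ 2 - y ^ 2)) =
      (2 / π) * (c * Real.arcsin (c / π) + Real.sqrt (π ^ 2 - c ^ 2)) := by
  have hπ : (0:ℝ) < π := Real.pi_pos
  obtain ⟨hc1, hc2⟩ := hc
  have hd1 : (-1:ℝ) ≤ c / π := by rw [le_div_iff₀ hπ]; linarith
  have hd2 : c / π ≤ 1 := by rw [div_le_one hπ]; linarith
  set θ₀ := Real.arcsin (c / π) with hθ₀def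
  have hsθ₀ : π * Real.sin θ₀ = c := by
    rw [hθ₀def, Real.sin_arcsin hd1 hd2]; field_simp
  have hθ₀mem : θ₀ ∈ Set.Icc (-(π/2)) (π/2) := Real.arcsin_mem_Icc _
  have himg : (fun θ => π * Real.sin θ) '' Set.Ioo (-(π/2)) (π/2) = Set.Ioo (-π) π := by
    ext y
    constructor
    · rintro ⟨θ, hθ, rfl⟩
      have h1 : Real.sin θ < Real.sin (π/2) :=
        Real.strictMonoOn_sin ⟨hθ.1.le, hθ.2.le⟩ ⟨by linarith [hθ.1, hθ.2], le_refl _⟩ hθ.2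
      have h2 : Real.sin (-(π/2)) < Real.sin θ :=
        Real.strictMonoOn_sin ⟨le_refl _, by linarith [hθ.1, hθ.2]⟩ ⟨hθ.1.le, hθ.2.le⟩ hθ.1
      rw [Real.sin_pi_div_two] at h1
      rw [Real.sin_neg, Real.sin_pi_div_two] at h2
      constructor <;> simp only [] <;> nlinarith
    · intro hy
      refine ⟨Real.arcsin (y / π), ⟨?_, ?_⟩, ?_⟩
      · exact Real.neg_pi_div_two_lt_arcsin.2 (by rw [lt_div_iff₀ hπ]; linarith [hy.1])
      · exact Real.arcsin_lt_pi_div_two.2 (by rw [div_lt_one hπ]; linarith [hy.2])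
      · show π * Real.sin (Real.arcsin (y / π)) = y
        rw [Real.sin_arcsin (by rw [le_div_iff₀ hπ]; linarith [hy.1])
          (by rw [div_le_one hπ]; linarith [hy.2])]
        field_simp
  have hinj : Set.InjOn (fun θ => π * Real.sin θ) (Set.Ioo (-(π/2)) (π/2)) := by
    intro a ha b hb h
    exact Real.injOn_sin ⟨ha.1.le, ha.2.le⟩ ⟨hb.1.le, hb.2.le⟩
      (mul_left_cancel₀ (ne_of_gt hπ) h)
  have hderiv : ∀ x ∈ Set.Ioo (-(π/2)) (π/2),
      HasDerivWithinAt (fun θ => π * Real.sin θ) (π * Real.cos x) (Set.Ioo (-(π/2)) (π/2)) x :=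
    fun x _ => ((Real.hasDerivAt_sin x).const_mul π).hasDerivWithinAt
  have hcov := MeasureTheory.integral_image_eq_integral_abs_deriv_smul measurableSet_Ioo
    hderiv hinj (fun y => |y - c| / (π * Real.sqrt (π ^ 2 - y ^ 2)))
  rw [himg] at hcov
  rw [hcov]
  have hsimp : ∫ x in Set.Ioo (-(π/2)) (π/2),
      |π * Real.cos x| • (|π * Real.sin x - c| / (π * Real.sqrt (π ^ 2 - (π * Real.sin x) ^ 2)))
      = ∫ x in Set.Ioo (-(π/2)) (π/2), |π * Real.sin x - c| / π := by
    apply MeasureTheory.setIntegral_congr_fun measurableSet_Ioo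
    intro x hx
    have hcos : 0 < Real.cos x := Real.cos_pos_of_mem_Ioo hx
    have hsq : π ^ 2 - (π * Real.sin x) ^ 2 = π ^ 2 * Real.cos x ^ 2 := by
      have := Real.sin_sq_add_cos_sq x; nlinarith
    show |π * Real.cos x| • (|π * Real.sin x - c| / (π * Real.sqrt (π ^ 2 - (π * Real.sin x) ^ 2)))
      = |π * Real.sin x - c| / π
    rw [hsq, Real.sqrt_mul (sq_nonneg π), Real.sqrt_sq hπ.le, Real.sqrt_sq hcos.le,
      smul_eq_mul, abs_of_pos (by positivity)]
    field_simp
  rw [hsimp]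
  have hIoo : ∫ x in Set.Ioo (-(π/2)) (π/2), |π * Real.sin x - c| / π
      = ∫ x in (-(π/2))..(π/2), |π * Real.sin x - c| / π := by
    rw [intervalIntegral.integral_of_le (by linarith), MeasureTheory.integral_Ioc_eq_integral_Ioo]
  rw [hIoo]
  have hcont : Continuous fun x => |π * Real.sin x - c| / π :=
    (((continuous_const.mul Real.continuous_sin).sub continuous_const).abs).div_const π
  rw [← intervalIntegral.integral_add_adjacent_intervals (a := -(π/2)) (b := θ₀) (c := π/2)
    (hcont.intervalIntegrable _ _) (hcont.intervalIntegrable _ _)]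
  have hcosθ₀ : π * Real.cos θ₀ = Real.sqrt (π ^ 2 - c ^ 2) := by
    rw [hθ₀def, Real.cos_arcsin]
    have h : π ^ 2 - c ^ 2 = (1 - (c/π)^2) * π ^ 2 := by field_simp
    rw [h, Real.sqrt_mul (by nlinarith : (0:ℝ) ≤ 1 - (c/π)^2), Real.sqrt_sq hπ.le]
    ring
  -- first piece
  have h1 : ∫ x in (-(π/2))..θ₀, |π * Real.sin x - c| / π
      = (c * θ₀ + π * Real.cos θ₀ + c * (π/2)) / π := by
    have heq : ∫ x in (-(π/2))..θ₀, |π * Real.sin x - c| / π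
        = ∫ x in (-(π/2))..θ₀, (c - π * Real.sin x) / π := by
      apply intervalIntegral.integral_congr
      intro x hx
      rw [Set.uIcc_of_le hθ₀mem.1] at hx
      have hx' : Real.sin x ≤ Real.sin θ₀ := by
        rcases eq_or_lt_of_le hx.2 with h | h
        · rw [h]
        · exact (Real.strictMonoOn_sin ⟨hx.1, le_trans hx.2 hθ₀mem.2⟩ hθ₀mem h).le
      have hle : π * Real.sin x - c ≤ 0 := by nlinarith
      show |π * Real.sin x - c| / π = (c - π * Real.sin x) / π
      rw [abs_of_nonpos hle]; ring_nf
    rw [heq]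
    have hder : ∀ x ∈ Set.uIcc (-(π/2)) θ₀,
        HasDerivAt (fun x => (c * x + π * Real.cos x) / π) ((c - π * Real.sin x) / π) x := by
      intro x _
      have h1 := (hasDerivAt_id x).const_mul c
      have h2 := (Real.hasDerivAt_cos x).const_mul π
      have h3 := (h1.add h2).div_const π
      simpa [mul_comm, mul_one, sub_eq_add_neg, mul_neg] using h3
    have hint : IntervalIntegrable (fun x => (c - π * Real.sin x) / π) volume (-(π/2)) θ₀ :=
      (((continuous_const.sub (continuous_const.mul Real.continuous_sin))).div_const π).intervalIntegrable _ _
    rw [intervalIntegral.integral_eq_sub_of_hasDerivAt hder hint]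
    rw [Real.cos_neg, Real.cos_pi_div_two]
    ring
  -- second piece
  have h2 : ∫ x in θ₀..(π/2), |π * Real.sin x - c| / π
      = (c * θ₀ + π * Real.cos θ₀ - c * (π/2)) / π := by
    have heq : ∫ x in θ₀..(π/2), |π * Real.sin x - c| / π
        = ∫ x in θ₀..(π/2), (π * Real.sin x - c) / π := by
      apply intervalIntegral.integral_congr
      intro x hx
      rw [Set.uIcc_of_le hθ₀mem.2] at hx
      have hx' : Real.sin θ₀ ≤ Real.sin x := by
        rcases eq_or_lt_of_le hx.1 with h | h
        · rw [h]
        · exact (Real.strictMonoOn_sin hθ₀mem ⟨le_trans hθ₀mem.1 hx.1, hx.2⟩ h).le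
      have hle : 0 ≤ π * Real.sin x - c := by nlinarith
      show |π * Real.sin x - c| / π = (π * Real.sin x - c) / π
      rw [abs_of_nonneg hle]
    rw [heq]
    have hder : ∀ x ∈ Set.uIcc θ₀ (π/2),
        HasDerivAt (fun x => (-(π * Real.cos x) - c * x) / π) ((π * Real.sin x - c) / π) x := by
      intro x _
      have h1 := ((Real.hasDerivAt_cos x).const_mul π).neg
      have h2 := (hasDerivAt_id x).const_mul c
      have h3 := (h1.sub h2).div_const π
      simpa [mul_comm, mul_one, mul_neg] using h3
    have hint : IntervalIntegrable (fun x => (π * Real.sin x - c) / π) volume θ₀ (π/2) :=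
      ((((continuous_const.mul Real.continuous_sin)).sub continuous_const).div_const π).intervalIntegrable _ _
    rw [intervalIntegral.integral_eq_sub_of_hasDerivAt hder hint]
    rw [Real.cos_pi_div_two]
    ring
  rw [h1, h2, ← hcosθ₀]
  field_simp
  ring
end

section
/- If (X, Y) ~ Arch on the unit disk and R = √(X² + Y²), then P(R > k) = √(1 - k²) for all k ∈ [0, 1]. Equivalently, R has the distribution of √(1 - U²) for U uniform on [0,1]. -/
/-!
The density of Arch depends only on the radius, so in polar coordinates the radius has density
`2πr · 1 / (2π√(1 - r²)) = r / √(1 - r²)` on `(0, 1)`, whose antiderivative is `-√(1 - r²)`.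
-/

open MeasureTheory Real
open scoped ENNReal

/-- The Archimedean measure on the unit disk. -/
noncomputable def archMeasure : Measure (ℝ × ℝ) :=
  volume.withDensity fun p =>
    if p.1 ^ 2 + p.2 ^ 2 < 1 then
      ENNReal.ofReal (1 / (2 * π * Real.sqrt (1 - p.1 ^ 2 - p.2 ^ 2))) else 0

open Set

theorem sqrt_sq_add_sq_polarCoord_symm {p : ℝ × ℝ} (hp : 0 ≤ p.1) :
    √((polarCoord.symm p).1 ^ 2 + (polarCoord.symm p).2 ^ 2) = p.1 := by
  rw [polarCoord_symm_apply, mul_pow, mul_pow, ← mul_add, cos_sq_add_sin_sq, mul_one,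
    sqrt_sq hp]

theorem lintegral_comp_sqrt_sq_add_sq {g : ℝ → ℝ≥0∞} (hg : Measurable g) :
    ∫⁻ p : ℝ × ℝ, g √(p.1 ^ 2 + p.2 ^ 2) =
      ENNReal.ofReal (2 * π) * ∫⁻ r in Ioi 0, ENNReal.ofReal r * g r := by
  have hpolar : ∀ p ∈ polarCoord.target, ENNReal.ofReal p.1 • g
      √((polarCoord.symm p).1 ^ 2 + (polarCoord.symm p).2 ^ 2) = ENNReal.ofReal p.1 * g p.1 :=
    fun p hp => by rw [sqrt_sq_add_sq_polarCoord_symm hp.1.le, smul_eq_mul]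
  rw [← lintegral_comp_polarCoord_symm,
    setLIntegral_congr_fun polarCoord.open_target.measurableSet hpolar,
    show polarCoord.target = Ioi 0 ×ˢ Ioo (-π) π from rfl, Measure.volume_eq_prod,
    setLIntegral_prod _ (by fun_prop)]
  simp_rw [lintegral_const, Measure.restrict_apply MeasurableSet.univ, univ_inter,
    Real.volume_Ioo, sub_neg_eq_add, ← two_mul]
  rw [lintegral_mul_const' _ _ ENNReal.ofReal_ne_top, mul_comm]

theorem withDensity_comp_sqrt_sq_add_sq_preimage {ρ : ℝ → ℝ≥0∞} (hρ : Measurable ρ)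
    {s : Set ℝ} (hs : MeasurableSet s) (hs0 : s ⊆ Ioi 0) :
    volume.withDensity (fun p : ℝ × ℝ => ρ √(p.1 ^ 2 + p.2 ^ 2))
        ((fun p : ℝ × ℝ => √(p.1 ^ 2 + p.2 ^ 2)) ⁻¹' s) =
      ENNReal.ofReal (2 * π) * ∫⁻ r in s, ENNReal.ofReal r * ρ r := by
  have hR : Measurable fun p : ℝ × ℝ => √(p.1 ^ 2 + p.2 ^ 2) := by fun_prop
  have hind : ∀ p : ℝ × ℝ, ((fun p : ℝ × ℝ => √(p.1 ^ 2 + p.2 ^ 2)) ⁻¹' s).indicator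
      (fun p => ρ √(p.1 ^ 2 + p.2 ^ 2)) p = s.indicator ρ √(p.1 ^ 2 + p.2 ^ 2) :=
    fun _ => indicator_comp_right _
  rw [withDensity_apply _ (hR hs), ← lintegral_indicator (hR hs), lintegral_congr hind,
    lintegral_comp_sqrt_sq_add_sq (hρ.indicator hs)]
  simp_rw [← indicator_mul_right]
  rw [lintegral_indicator hs, Measure.restrict_restrict hs, inter_eq_left.mpr hs0]

theorem lintegral_Ioo_ofReal_eq_sub_of_hasDerivAt {f f' : ℝ → ℝ} {a b : ℝ} (hab : a ≤ b)
    (hcont : ContinuousOn f (Icc a b)) (hderiv : ∀ x ∈ Ioo a b, HasDerivAt f (f' x) x)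
    (hpos : ∀ x ∈ Ioo a b, 0 ≤ f' x) :
    ∫⁻ x in Ioo a b, ENNReal.ofReal (f' x) = ENNReal.ofReal (f b - f a) := by
  have hint : IntegrableOn f' (Ioc a b) :=
    intervalIntegral.integrableOn_deriv_of_nonneg hcont hderiv hpos
  rw [← ofReal_integral_eq_lintegral_ofReal (hint.mono_set Ioo_subset_Ioc_self)
      ((ae_restrict_iff' measurableSet_Ioo).mpr (ae_of_all _ hpos)),
    ← integral_Ioc_eq_integral_Ioo, ← intervalIntegral.integral_of_le hab,
    intervalIntegral.integral_eq_sub_of_hasDerivAt_of_le hab hcont hderiv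
      ((intervalIntegrable_iff_integrableOn_Ioc_of_le hab).mpr hint)]

theorem hasDerivAt_neg_sqrt_one_sub_sq {r : ℝ} (hr : 1 - r ^ 2 ≠ 0) :
    HasDerivAt (fun x => -√(1 - x ^ 2)) (r / √(1 - r ^ 2)) r := by
  refine (((hasDerivAt_pow 2 r).const_sub 1).sqrt hr).neg.congr_deriv ?_
  field_simp
  ring

theorem lintegral_Ioo_div_sqrt_one_sub_sq {k : ℝ} (hk0 : 0 ≤ k) (hk1 : k ≤ 1) :
    ∫⁻ r in Ioo k 1, ENNReal.ofReal (r / √(1 - r ^ 2)) = ENNReal.ofReal √(1 - k ^ 2) := by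
  have hpos : ∀ r ∈ Ioo k 1, 0 < r ∧ 0 < 1 - r ^ 2 := fun r hr =>
    ⟨hk0.trans_lt hr.1, by nlinarith [hk0.trans_lt hr.1, hr.2]⟩
  rw [lintegral_Ioo_ofReal_eq_sub_of_hasDerivAt hk1 (by fun_prop)
    (fun r hr => hasDerivAt_neg_sqrt_one_sub_sq (hpos r hr).2.ne')
    (fun r hr => div_nonneg (hpos r hr).1.le (sqrt_nonneg _))]
  norm_num

noncomputable def archRadialDensity : ℝ → ℝ≥0∞ :=
  (Iio 1).indicator fun r => ENNReal.ofReal (1 / (2 * π * √(1 - r ^ 2)))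

theorem measurable_archRadialDensity : Measurable archRadialDensity :=
  Measurable.indicator (by fun_prop) measurableSet_Iio

theorem archMeasure_eq_withDensity_archRadialDensity :
    archMeasure = volume.withDensity fun p => archRadialDensity √(p.1 ^ 2 + p.2 ^ 2) := by
  unfold archMeasure
  congr 1
  funext p
  have hsq : √(p.1 ^ 2 + p.2 ^ 2) ^ 2 = p.1 ^ 2 + p.2 ^ 2 := sq_sqrt (by positivity)
  simp only [archRadialDensity, indicator_apply, mem_Iio, sqrt_lt' one_pos, one_pow, hsq,
    sub_add_eq_sub_sub]

theorem two_pi_mul_setLIntegral_Ioi_mul_archRadialDensity {k : ℝ} (hk0 : 0 ≤ k) :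
    ENNReal.ofReal (2 * π) * ∫⁻ r in Ioi k, ENNReal.ofReal r * archRadialDensity r =
      ∫⁻ r in Ioo k 1, ENNReal.ofReal (r / √(1 - r ^ 2)) := by
  simp_rw [archRadialDensity, ← indicator_mul_right]
  rw [lintegral_indicator measurableSet_Iio, Measure.restrict_restrict measurableSet_Iio,
    Iio_inter_Ioi, ← lintegral_const_mul' _ _ ENNReal.ofReal_ne_top]
  refine setLIntegral_congr_fun measurableSet_Ioo fun r hr => ?_
  have hr0 : 0 < r := hk0.trans_lt hr.1
  have hs : 0 < √(1 - r ^ 2) := sqrt_pos.mpr (by nlinarith [hr.2])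
  rw [← ENNReal.ofReal_mul hr0.le, ← ENNReal.ofReal_mul (by positivity)]
  congr 1
  field_simp

/-- If `(X, Y) ~ Arch` and `R = √(X² + Y²)`, then `P(R > k) = √(1 - k²)` for
every `k ∈ [0, 1]`. -/
theorem arch_radius_survival (k : ℝ) (hk : k ∈ Set.Icc (0 : ℝ) 1) :
    archMeasure {p : ℝ × ℝ | k < Real.sqrt (p.1 ^ 2 + p.2 ^ 2)} =
      ENNReal.ofReal (Real.sqrt (1 - k ^ 2)) := by
  obtain ⟨hk0, hk1⟩ := hk
  rw [archMeasure_eq_withDensity_archRadialDensity]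
  calc _ = ENNReal.ofReal (2 * π) * ∫⁻ r in Ioi k, ENNReal.ofReal r * archRadialDensity r :=
        withDensity_comp_sqrt_sq_add_sq_preimage measurable_archRadialDensity measurableSet_Ioi
          (Ioi_subset_Ioi hk0)
    _ = ∫⁻ r in Ioo k 1, ENNReal.ofReal (r / √(1 - r ^ 2)) :=
        two_pi_mul_setLIntegral_Ioi_mul_archRadialDensity hk0
    _ = _ := lintegral_Ioo_div_sqrt_one_sub_sq hk0 hk1
end

section
/- The integral transform H(r)(k) = ∫₀ᵏ r(√(1-k²)/√(1-x²)) dx is injective on the space of continuous functions r: [0,1] → ℝ that are locally Lipschitz on [0,1): if H(r)(k) = 0 for all k ∈ [0,1], then r ≡ 0. -/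
open MeasureTheory Real

/-!
Put `ρ(u) = r(u) / u²`. For `0 < c < 1`, the hypothesis at `k = √(1 - c²)`, after the
substitution `x = √(1 - c²/u²)`, becomes the Abel-type equation `∫_c^1 ρ(u) / √(u² - c²) du = 0`.
Multiplying by `c / √(c² - s²)`, integrating over `c ∈ (s, 1)` and exchanging the integrals
inverts it: since `∫_s^u c dc / (√(c² - s²) √(u² - c²)) = π/2`, we get `∫_s^1 ρ = 0` for every
`s ∈ (0, 1)`. Hence `ρ`, and so `r`, vanishes on `(0, 1)`, and on `[0, 1]` by continuity.
-/

open Set Topology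

-- For `0 ≤ c` this vanishes outside `s < c < u`, through the junk values `√x = 0` for `x ≤ 0`
-- and `x / 0 = 0`; this replaces indicator functions in the Fubini argument.
noncomputable def abelKernel (s u c : ℝ) : ℝ := c / (√(c ^ 2 - s ^ 2) * √(u ^ 2 - c ^ 2))

theorem hasDerivAt_arcsin_abelKernel {s u c : ℝ} (hs : 0 ≤ s) (hc : c ∈ Ioo s u) :
    HasDerivAt (fun c : ℝ => arcsin ((2 * c ^ 2 - s ^ 2 - u ^ 2) / (u ^ 2 - s ^ 2)) / 2)
      (abelKernel s u c) c := by
  obtain ⟨hsc, hcu⟩ := hc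
  have hA : 0 < c ^ 2 - s ^ 2 := by nlinarith
  have hB : 0 < u ^ 2 - c ^ 2 := by nlinarith
  have hD : 0 < u ^ 2 - s ^ 2 := by linarith
  set w := (2 * c ^ 2 - s ^ 2 - u ^ 2) / (u ^ 2 - s ^ 2) with hw
  have hw1 : w < 1 := by rw [hw, div_lt_one hD]; linarith
  have hw1' : -1 < w := by rw [hw, lt_div_iff₀ hD]; linarith
  have hlin : HasDerivAt (fun c : ℝ => (2 * c ^ 2 - s ^ 2 - u ^ 2) / (u ^ 2 - s ^ 2))
      (2 * (2 * c) / (u ^ 2 - s ^ 2)) c := by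
    simpa using ((((hasDerivAt_pow 2 c).const_mul 2).sub_const (s ^ 2)).sub_const (u ^ 2)).div_const
      (u ^ 2 - s ^ 2)
  have hsqrt : √(1 - w ^ 2) = 2 * √(c ^ 2 - s ^ 2) * √(u ^ 2 - c ^ 2) / (u ^ 2 - s ^ 2) := by
    have hsq : 1 - w ^ 2 = (2 * √(c ^ 2 - s ^ 2) * √(u ^ 2 - c ^ 2) / (u ^ 2 - s ^ 2)) ^ 2 := by
      rw [hw, div_pow, div_pow, mul_pow, mul_pow, sq_sqrt hA.le, sq_sqrt hB.le]
      field_simp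
      ring
    rw [hsq, sqrt_sq (by positivity)]
  refine (((hasDerivAt_arcsin hw1'.ne' hw1.ne).comp c hlin).div_const 2).congr_deriv ?_
  rw [abelKernel, hsqrt]
  have := sqrt_pos.2 hA
  have := sqrt_pos.2 hB
  field_simp

theorem abelKernel_nonneg {s u c : ℝ} (hc : 0 ≤ c) : 0 ≤ abelKernel s u c := by
  unfold abelKernel
  positivity

theorem abelKernel_eq_zero_of_le {s u c : ℝ} (hu : 0 ≤ u) (huc : u ≤ c) :
    abelKernel s u c = 0 := by
  rw [abelKernel, sqrt_eq_zero'.2 (show u ^ 2 - c ^ 2 ≤ 0 by nlinarith), mul_zero, div_zero]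

theorem integrableOn_abelKernel {s u b : ℝ} (hs : 0 ≤ s) (hsu : s ≤ u) :
    IntegrableOn (abelKernel s u) (Ioo s b) := by
  have hIoo : IntegrableOn (abelKernel s u) (Ioo s u) := by
    rw [← integrableOn_Ioc_iff_integrableOn_Ioo]
    exact intervalIntegral.integrableOn_deriv_of_nonneg (by fun_prop)
      (fun c hc => hasDerivAt_arcsin_abelKernel hs hc)
      fun c hc => abelKernel_nonneg (hs.trans hc.1.le)
  exact hIoo.of_forall_sdiff_eq_zero measurableSet_Ioo fun c hc =>
    abelKernel_eq_zero_of_le (hs.trans hsu) (not_lt.1 fun h => hc.2 ⟨hc.1.1, h⟩)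

theorem integral_abelKernel {s u b : ℝ} (hs : 0 ≤ s) (hsu : s < u) (hub : u ≤ b) :
    ∫ c in Ioo s b, abelKernel s u c = π / 2 := by
  have hD : u ^ 2 - s ^ 2 ≠ 0 := by nlinarith
  rw [setIntegral_eq_of_subset_of_forall_sdiff_eq_zero measurableSet_Ioo
      (Ioo_subset_Ioo_right hub) fun c hc =>
        abelKernel_eq_zero_of_le (hs.trans hsu.le) (not_lt.1 fun h => hc.2 ⟨hc.1.1, h⟩),
    ← integral_Ioc_eq_integral_Ioo, ← intervalIntegral.integral_of_le hsu.le,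
    intervalIntegral.integral_eq_sub_of_hasDeriv_right_of_le hsu.le (by fun_prop)
      (fun c hc => (hasDerivAt_arcsin_abelKernel hs hc).hasDerivWithinAt)
      ((intervalIntegrable_iff_integrableOn_Ioo_of_le hsu.le).2
        (integrableOn_abelKernel hs hsu.le))]
  have h1 : (2 * u ^ 2 - s ^ 2 - u ^ 2) / (u ^ 2 - s ^ 2) = 1 := by field_simp; ring
  have h2 : (2 * s ^ 2 - s ^ 2 - u ^ 2) / (u ^ 2 - s ^ 2) = -1 := by field_simp; ring
  rw [h1, h2, arcsin_one, arcsin_neg, arcsin_one]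
  ring

theorem hasDerivAt_sqrt_one_sub_sq_div_sq {c u : ℝ} (hc : 0 < c) (hu : c < u) :
    HasDerivAt (fun u : ℝ => √(1 - c ^ 2 / u ^ 2)) (c ^ 2 / (u ^ 2 * √(u ^ 2 - c ^ 2))) u := by
  have hu0 : 0 < u := hc.trans hu
  have hB : 0 < u ^ 2 - c ^ 2 := by nlinarith
  have hpos : 0 < 1 - c ^ 2 / u ^ 2 := by
    rw [sub_pos, div_lt_one (by positivity)]; nlinarith
  have hinner : HasDerivAt (fun u : ℝ => 1 - c ^ 2 / u ^ 2) (2 * c ^ 2 / u ^ 3) u := by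
    refine (((hasDerivAt_const u (c ^ 2)).div (hasDerivAt_pow 2 u) (by positivity)).const_sub
      1).congr_deriv ?_
    field_simp
    ring
  refine ((hasDerivAt_sqrt hpos.ne').comp u hinner).congr_deriv ?_
  have hsqrt : √(1 - c ^ 2 / u ^ 2) = √(u ^ 2 - c ^ 2) / u := by
    rw [show 1 - c ^ 2 / u ^ 2 = (u ^ 2 - c ^ 2) / u ^ 2 by field_simp, sqrt_div hB.le,
      sqrt_sq hu0.le]
  rw [hsqrt]
  have := sqrt_pos.2 hB
  field_simp

/-- The substitution `x = √(1 - c²/u²)`, i.e. `u = c / √(1 - x²)`. -/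
theorem setIntegral_comp_div_sqrt_one_sub_sq (ρ : ℝ → ℝ) {c : ℝ} (hc : 0 < c) :
    ∫ x in Ioo 0 √(1 - c ^ 2), ρ (c / √(1 - x ^ 2)) =
      c ^ 2 * ∫ u in Ioo c 1, ρ u / u ^ 2 / √(u ^ 2 - c ^ 2) := by
  set ψ : ℝ → ℝ := fun u => √(1 - c ^ 2 / u ^ 2)
  set φ : ℝ → ℝ := fun x => c / √(1 - x ^ 2)
  have hψ : MapsTo ψ (Ioo c 1) (Ioo 0 √(1 - c ^ 2)) := by
    intro u ⟨hcu, hu1⟩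
    have hu0 : 0 < u := hc.trans hcu
    have hu2 : u ^ 2 < 1 := by nlinarith
    refine ⟨sqrt_pos.2 ?_, sqrt_lt_sqrt ?_ ?_⟩
    · rw [sub_pos, div_lt_one (by positivity)]; nlinarith
    · rw [sub_nonneg, div_le_one (by positivity)]; nlinarith
    · rw [sub_lt_sub_iff_left, lt_div_iff₀ (by positivity)]
      nlinarith [mul_lt_mul_of_pos_left hu2 (pow_pos hc 2)]
  have hφ : MapsTo φ (Ioo 0 √(1 - c ^ 2)) (Ioo c 1) := by
    intro x ⟨hx0, hxk⟩
    have hx2 : x ^ 2 < 1 - c ^ 2 := (lt_sqrt hx0.le).1 hxk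
    have hlt : √(1 - x ^ 2) < 1 := (sqrt_lt' one_pos).2 (by nlinarith)
    have hgt : c < √(1 - x ^ 2) := (lt_sqrt hc.le).2 (by linarith)
    exact ⟨(lt_div_iff₀ (hc.trans hgt)).2 (by nlinarith), (div_lt_one (hc.trans hgt)).2 hgt⟩
  have hinv : InvOn φ ψ (Ioo c 1) (Ioo 0 √(1 - c ^ 2)) := by
    constructor
    · intro u ⟨hcu, _⟩
      have hu0 : 0 < u := hc.trans hcu
      simp only [φ, ψ]
      rw [sq_sqrt (by rw [sub_nonneg, div_le_one (by positivity)]; nlinarith), sub_sub_cancel,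
        sqrt_div' _ (by positivity), sqrt_sq hc.le, sqrt_sq hu0.le]
      field_simp
    · intro x ⟨hx0, hxk⟩
      have hx2 : x ^ 2 < 1 - c ^ 2 := (lt_sqrt hx0.le).1 hxk
      simp only [φ, ψ]
      rw [div_pow, sq_sqrt (by linarith [sq_nonneg c]), div_div_cancel₀ (by positivity),
        sub_sub_cancel, sqrt_sq hx0.le]
  have hbij := hinv.bijOn hψ hφ
  rw [← hbij.image_eq, integral_image_eq_integral_abs_deriv_smul measurableSet_Ioo
      (fun u hu => (hasDerivAt_sqrt_one_sub_sq_div_sq hc hu.1).hasDerivWithinAt) hbij.injOn,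
    ← integral_const_mul]
  refine setIntegral_congr_fun measurableSet_Ioo fun u hu => ?_
  have hu0 : 0 < u := hc.trans hu.1
  have hφψ : c / √(1 - √(1 - c ^ 2 / u ^ 2) ^ 2) = u := hinv.1 hu
  rw [smul_eq_mul, hφψ, abs_of_nonneg (by positivity)]
  field_simp

theorem integrable_mul_abelKernel {φ : ℝ → ℝ} {s b : ℝ} (hs : 0 ≤ s)
    (hφ : IntegrableOn φ (Ioo s b)) :
    Integrable (fun p : ℝ × ℝ => φ p.1 * abelKernel s p.1 p.2)
      ((volume.restrict (Ioo s b)).prod (volume.restrict (Ioo s b))) := by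
  have hK : Measurable fun p : ℝ × ℝ => abelKernel s p.1 p.2 := by
    unfold abelKernel
    fun_prop
  refine (integrable_prod_iff
    (hφ.aestronglyMeasurable.comp_fst.mul hK.aestronglyMeasurable)).2 ⟨?_, ?_⟩
  · filter_upwards [ae_restrict_mem measurableSet_Ioo] with u hu
    exact (integrableOn_abelKernel hs hu.1.le).const_mul (φ u)
  refine (hφ.norm.mul_const (π / 2)).congr ?_
  filter_upwards [ae_restrict_mem measurableSet_Ioo] with u hu
  rw [← integral_abelKernel hs hu.1 hu.2.le, ← integral_const_mul]
  refine setIntegral_congr_fun measurableSet_Ioo fun c hc => ?_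
  rw [Pi.mul_apply, norm_mul, Real.norm_of_nonneg (abelKernel_nonneg (hs.trans hc.1.le))]

theorem setIntegral_eq_zero_of_abel {φ : ℝ → ℝ} {s b : ℝ} (hs : 0 ≤ s)
    (hφ : IntegrableOn φ (Ioo s b))
    (h : ∀ c ∈ Ioo s b, ∫ u in Ioo c b, φ u / √(u ^ 2 - c ^ 2) = 0) :
    ∫ u in Ioo s b, φ u = 0 := by
  have hswap := integral_integral_swap (f := fun u c => φ u * abelKernel s u c)
    (integrable_mul_abelKernel hs hφ)
  have hlhs : ∫ u in Ioo s b, ∫ c in Ioo s b, φ u * abelKernel s u c =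
      π / 2 * ∫ u in Ioo s b, φ u := by
    rw [← integral_const_mul]
    refine setIntegral_congr_fun measurableSet_Ioo fun u hu => ?_
    rw [integral_const_mul, integral_abelKernel hs hu.1 hu.2.le, mul_comm]
  have hrhs : ∫ c in Ioo s b, ∫ u in Ioo s b, φ u * abelKernel s u c = 0 := by
    refine setIntegral_eq_zero_of_forall_eq_zero fun c hc => ?_
    rw [setIntegral_eq_of_subset_of_forall_sdiff_eq_zero measurableSet_Ioo
      (Ioo_subset_Ioo_left hc.1.le) fun u hu => by
        rw [abelKernel_eq_zero_of_le (hs.trans hu.1.1.le) (not_lt.1 fun h => hu.2 ⟨h, hu.1.2⟩),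
          mul_zero]]
    calc ∫ u in Ioo c b, φ u * abelKernel s u c
        = ∫ u in Ioo c b, c / √(c ^ 2 - s ^ 2) * (φ u / √(u ^ 2 - c ^ 2)) := by
          simp only [abelKernel]
          congr 1; ext u; ring
      _ = 0 := by rw [integral_const_mul, h c hc, mul_zero]
  rw [hlhs, hrhs] at hswap
  exact (mul_eq_zero.1 hswap).resolve_left (by positivity)

theorem eqOn_zero_of_forall_setIntegral_Ioo_eq_zero {φ : ℝ → ℝ} {a b : ℝ}
    (hφ : ContinuousOn φ (Ioc a b)) (h : ∀ s ∈ Ioo a b, ∫ u in Ioo s b, φ u = 0) :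
    EqOn φ 0 (Ioo a b) := by
  intro x hx
  have hderiv : HasDerivAt (fun s => ∫ u in s..b, φ u) (-φ x) x :=
    intervalIntegral.integral_hasDerivAt_left
      ((hφ.mono (uIcc_of_le hx.2.le ▸ Icc_subset_Ioc_left hx.1)).intervalIntegrable)
      (ContinuousAt.stronglyMeasurableAtFilter isOpen_Ioo
        (fun y hy => hφ.continuousAt (Ioc_mem_nhds hy.1 hy.2)) x hx)
      (hφ.continuousAt (Ioc_mem_nhds hx.1 hx.2))
  have hconst : (fun s => ∫ u in s..b, φ u) =ᶠ[𝓝 x] fun _ => 0 := by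
    filter_upwards [isOpen_Ioo.mem_nhds hx] with s hs
    rw [intervalIntegral.integral_of_le hs.2.le, integral_Ioc_eq_integral_Ioo, h s hs]
  simpa using hderiv.unique ((hasDerivAt_const x (0 : ℝ)).congr_of_eventuallyEq hconst)

theorem integral_transform_injective_general (r : ℝ → ℝ)
    (hcont : ContinuousOn r (Set.Icc 0 1))
    (hzero : ∀ k ∈ Set.Icc (0 : ℝ) 1,
      ∫ x in Set.Icc (0 : ℝ) k, r (Real.sqrt (1 - k ^ 2) / Real.sqrt (1 - x ^ 2)) = 0) :
    ∀ x ∈ Set.Icc (0 : ℝ) 1, r x = 0 := by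
  have hρ : ContinuousOn (fun u => r u / u ^ 2) (Ioc 0 1) :=
    (hcont.mono Ioc_subset_Icc_self).div (by fun_prop) fun u hu => by have := hu.1; positivity
  have habel : ∀ c ∈ Ioo (0 : ℝ) 1, ∫ u in Ioo c 1, r u / u ^ 2 / √(u ^ 2 - c ^ 2) = 0 := by
    intro c ⟨hc0, hc1⟩
    have hk : √(1 - √(1 - c ^ 2) ^ 2) = c := by
      rw [sq_sqrt (by nlinarith), sub_sub_cancel, sqrt_sq hc0.le]
    have hzero_k := hzero √(1 - c ^ 2) ⟨sqrt_nonneg _, sqrt_le_one.2 (by nlinarith)⟩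
    rw [hk, integral_Icc_eq_integral_Ioo, setIntegral_comp_div_sqrt_one_sub_sq r hc0] at hzero_k
    exact (mul_eq_zero.1 hzero_k).resolve_left (by positivity)
  have hint : ∀ s ∈ Ioo (0 : ℝ) 1, ∫ u in Ioo s 1, r u / u ^ 2 = 0 := fun s hs =>
    setIntegral_eq_zero_of_abel hs.1.le
      (((hρ.mono (Icc_subset_Ioc_left hs.1)).integrableOn_compact isCompact_Icc).mono_set
        Ioo_subset_Icc_self)
      fun c hc => habel c ⟨hs.1.trans hc.1, hc.2⟩
  have hIoo : EqOn r 0 (Ioo 0 1) := fun u hu => by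
    simpa [hu.1.ne'] using eqOn_zero_of_forall_setIntegral_Ioo_eq_zero hρ hint hu
  exact hIoo.of_subset_closure hcont continuousOn_const Ioo_subset_Icc_self
    (closure_Ioo zero_ne_one).symm.subset

/-- The integral transform `H(r)(k) = ∫₀ᵏ r(√(1-k²)/√(1-x²)) dx` is injective on the
space of continuous functions `r : [0,1] → ℝ` that are locally Lipschitz on `[0,1)`:
if `H(r)(k) = 0` for all `k ∈ [0,1]`, then `r ≡ 0` on `[0,1]`. -/
theorem integral_transform_injective (r : ℝ → ℝ)
    (hcont : ContinuousOn r (Set.Icc 0 1))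
    (hlip : ∀ b : ℝ, b < 1 → ∃ K : NNReal, LipschitzOnWith K r (Set.Icc 0 b))
    (hzero : ∀ k ∈ Set.Icc (0 : ℝ) 1,
      ∫ x in Set.Icc (0 : ℝ) k, r (Real.sqrt (1 - k ^ 2) / Real.sqrt (1 - x ^ 2)) = 0) :
    ∀ x ∈ Set.Icc (0 : ℝ) 1, r x = 0 :=
  integral_transform_injective_general r hcont hzero
end

section
/- Let ν₁ and ν₂ be probability measures on (0,∞) with equal finite first moments. If their size-bias ratio functions coincide, r_{ν₁} = r_{ν₂} on [0,1], then ν₁ = ν₂. -/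
/-!
Write `ν̂` for the size-biased measure and `Ŝ⁻¹(x) = (y(x), q(x))`. For `0 < x < x' < 1` the
points `Ŝ⁻¹(x') ≤ Ŝ⁻¹(x)` bound a lexicographic interval of `ν̂`-mass `x' - x` and `ν`-mass
`r(x') - r(x)`. Since `dν̂/dν (t) = t / m` and `y(x') ≤ t ≤ y(x)` on that interval,
`y(x') (r(x') - r(x)) ≤ m (x' - x) ≤ y(x) (r(x') - r(x))`.
If `r₁ = r₂`, comparing these bounds for `ν₁` and `ν₂` gives `y₂(x') ≤ y₁(x)` whenever `x < x'`,
which forces `ν̂₂ (t, ∞) ≤ ν̂₁ (t, ∞)` for every `t`. By symmetry `ν̂₁ = ν̂₂`, and `ν` is recovered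
from `ν̂` as `(m / t) dν̂`.
-/

open MeasureTheory Real

/-- The extended survival function of a measure `ρ` on `ℝ`:
`S_ρ(y, q) = ρ((y, ∞)) + (1 - q) ρ({y})`, viewed as a function on `ℝ × [0,1]`
(with the lexicographic order). -/
noncomputable def extSurv (ρ : Measure ℝ) (y q : ℝ) : ℝ :=
  (ρ (Set.Ioi y)).toReal + (1 - q) * (ρ {y}).toReal

/-- First coordinate of the lexicographic supremum `Ŝ⁻¹(x) = sup {(y,q) : S_ρ(y,q) = x}`. -/
noncomputable def invFst (ρ : Measure ℝ) (x : ℝ) : ℝ :=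
  sSup {y : ℝ | ∃ q ∈ Set.Icc (0 : ℝ) 1, extSurv ρ y q = x}

/-- Second coordinate of the lexicographic supremum `Ŝ⁻¹(x)`. -/
noncomputable def invSnd (ρ : Measure ℝ) (x : ℝ) : ℝ :=
  sSup {q ∈ Set.Icc (0 : ℝ) 1 | extSurv ρ (invFst ρ x) q = x}

/-- The size-biased version of `ν`, when `ν` has mean `m`: `dν̂/dν(y) = y / m`. -/
noncomputable def sizeBiased (ν : Measure ℝ) (m : ℝ) : Measure ℝ :=
  ν.withDensity fun y => ENNReal.ofReal (y / m)

/-- The size-bias ratio function `r_ν(x) = S_ν(Ŝ_ν⁻¹(x))`, where `S_ν` is the extended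
survival function of `ν` and `Ŝ_ν` that of its size-biased version. -/
noncomputable def sbRatio (ν : Measure ℝ) (m : ℝ) (x : ℝ) : ℝ :=
  extSurv ν (invFst (sizeBiased ν m) x) (invSnd (sizeBiased ν m) x)

open Set Filter Topology

namespace SizeBias

section ExtSurv

variable {ρ : Measure ℝ} {x y y' q q' : ℝ}

lemma extSurv_eq : extSurv ρ y q = ρ.real (Ioi y) + (1 - q) * ρ.real {y} := rfl

lemma measureReal_Ioi_le_extSurv (hq : q ≤ 1) : ρ.real (Ioi y) ≤ extSurv ρ y q :=
  le_add_of_nonneg_right (mul_nonneg (sub_nonneg.2 hq) measureReal_nonneg)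

variable [IsFiniteMeasure ρ]

lemma measureReal_Ici_eq_add (y : ℝ) : ρ.real (Ici y) = ρ.real (Ioi y) + ρ.real {y} := by
  rw [← Ioi_insert, insert_eq, measureReal_union' (s₂ := Ioi y) (by simp)
    (measurableSet_singleton y), add_comm]

lemma extSurv_le_measureReal_Ici (hq : 0 ≤ q) : extSurv ρ y q ≤ ρ.real (Ici y) := by
  rw [extSurv_eq, measureReal_Ici_eq_add]
  nlinarith [measureReal_nonneg (μ := ρ) (s := {y})]

lemma exists_extSurv_eq_iff :
    (∃ q ∈ Icc (0 : ℝ) 1, extSurv ρ y q = x) ↔ ρ.real (Ioi y) ≤ x ∧ x ≤ ρ.real (Ici y) := by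
  constructor
  · rintro ⟨q, hq, rfl⟩
    exact ⟨measureReal_Ioi_le_extSurv hq.2, extSurv_le_measureReal_Ici hq.1⟩
  · intro hx
    have hcont : ContinuousOn (extSurv ρ y) (Icc 0 1) := by
      unfold extSurv; fun_prop
    have hends : Icc (extSurv ρ y 1) (extSurv ρ y 0) = Icc (ρ.real (Ioi y)) (ρ.real (Ici y)) := by
      rw [extSurv_eq, extSurv_eq, measureReal_Ici_eq_add]; ring_nf
    exact intermediate_value_Icc' zero_le_one hcont (by rwa [hends])

lemma extSurv_sub_extSurv_of_lt (h : y < y') :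
    extSurv ρ y q - extSurv ρ y' q' =
      (1 - q) * ρ.real {y} + ρ.real (Ioo y y') + q' * ρ.real {y'} := by
  have hsplit : ρ.real (Ioi y) = ρ.real (Ioo y y') + ρ.real (Ici y') := by
    rw [← Ioo_union_Ici_eq_Ioi h, measureReal_union (disjoint_left.2 fun _ ht ht' => ht.2.not_ge ht')
      measurableSet_Ici]
  rw [extSurv_eq, extSurv_eq, hsplit, measureReal_Ici_eq_add]
  ring

lemma le_measureReal_Ici_of_forall_lt {b c : ℝ} (h : ∀ y < b, c ≤ ρ.real (Ioi y)) :
    c ≤ ρ.real (Ici b) := by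
  set u : ℕ → ℝ := fun n => b - 1 / (n + 1)
  have hu : Tendsto u atTop (𝓝 b) := by
    simpa [u] using tendsto_const_nhds.sub (tendsto_one_div_add_atTop_nhds_zero_nat (𝕜 := ℝ))
  have hlt : ∀ n, u n < b := fun n => sub_lt_self b Nat.one_div_pos_of_nat
  have hanti : Antitone fun n => Ioi (u n) := fun i j hij =>
    Ioi_subset_Ioi (sub_le_sub_left (Nat.one_div_le_one_div hij) b)
  have hinter : ⋂ n, Ioi (u n) = Ici b := by
    rw [← compl_Iio, ← iUnion_Iic_eq_Iio_of_lt_of_tendsto hlt hu, compl_iUnion]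
    simp_rw [compl_Iic]
  rw [← hinter]
  exact ge_of_tendsto' ((ENNReal.tendsto_toReal (measure_ne_top _ _)).comp
    (tendsto_measure_iInter_atTop (fun _ => measurableSet_Ioi.nullMeasurableSet) hanti
      ⟨0, measure_ne_top _ _⟩)) fun n => h _ (hlt n)

lemma measureReal_Ioi_le_of_forall_gt {b c : ℝ} (h : ∀ y > b, ρ.real (Ici y) ≤ c) :
    ρ.real (Ioi b) ≤ c := by
  set u : ℕ → ℝ := fun n => b + 1 / (n + 1)
  have hu : Tendsto u atTop (𝓝 b) := by
    simpa [u] using tendsto_const_nhds.add (tendsto_one_div_add_atTop_nhds_zero_nat (𝕜 := ℝ))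
  have hgt : ∀ n, b < u n := fun n => lt_add_of_pos_right b Nat.one_div_pos_of_nat
  have hmono : Monotone fun n => Ici (u n) := fun i j hij =>
    Ici_subset_Ici.2 (add_le_add_right (Nat.one_div_le_one_div hij) b)
  rw [← iUnion_Ici_eq_Ioi_of_lt_of_tendsto hgt hu]
  exact le_of_tendsto' ((ENNReal.tendsto_toReal (measure_ne_top _ _)).comp
    (tendsto_measure_iUnion_atTop hmono)) fun n => h _ (hgt n)

end ExtSurv

section Quantile

variable {ρ : Measure ℝ} [IsProbabilityMeasure ρ] {x x' y t : ℝ}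

lemma nonempty_setOf_le_measureReal_Ici (hx : x < 1) : {y | x ≤ ρ.real (Ici y)}.Nonempty := by
  have hlim : Tendsto (fun y => ρ.real (Ici y)) atBot (𝓝 (ρ.real univ)) :=
    (ENNReal.tendsto_toReal (measure_ne_top ρ univ)).comp (tendsto_measure_Ici_atBot ρ)
  rw [probReal_univ] at hlim
  exact (hlim.eventually (eventually_ge_nhds hx)).exists

lemma bddAbove_setOf_le_measureReal_Ici (hx : 0 < x) : BddAbove {y | x ≤ ρ.real (Ici y)} := by
  have hinter : ⋂ y : ℝ, Ici y = ∅ :=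
    eq_empty_of_forall_notMem fun t ht => (lt_add_one t).not_ge (mem_iInter.1 ht (t + 1))
  have hlim : Tendsto (fun y => ρ.real (Ici y)) atTop (𝓝 (ρ.real (⋂ y : ℝ, Ici y))) :=
    (ENNReal.tendsto_toReal (measure_ne_top _ _)).comp
      (tendsto_measure_iInter_atTop (fun _ => measurableSet_Ici.nullMeasurableSet) antitone_Ici
        ⟨0, measure_ne_top _ _⟩)
  rw [hinter, measureReal_empty] at hlim
  obtain ⟨N, hN⟩ := eventually_atTop.1 (hlim.eventually (eventually_lt_nhds hx))
  exact ⟨N, fun y hy => not_lt.1 fun hNy => (hN y hNy.le).not_ge hy⟩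

lemma le_measureReal_Ici_sSup (hx1 : x < 1) :
    x ≤ ρ.real (Ici (sSup {y | x ≤ ρ.real (Ici y)})) :=
  le_measureReal_Ici_of_forall_lt fun y hy => by
    obtain ⟨w, hwB, hyw⟩ := exists_lt_of_lt_csSup (nonempty_setOf_le_measureReal_Ici hx1) hy
    exact hwB.trans (measureReal_mono (Ici_subset_Ioi.2 hyw))

lemma measureReal_Ioi_sSup_le (hx0 : 0 < x) :
    ρ.real (Ioi (sSup {y | x ≤ ρ.real (Ici y)})) ≤ x :=
  measureReal_Ioi_le_of_forall_gt fun _ hy =>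
    (not_le.1 fun hyB => ((le_csSup (bddAbove_setOf_le_measureReal_Ici hx0) hyB).not_gt hy)).le

/-- The level set `{y | ∃ q, S_ρ(y, q) = x}` lies inside `{y | x ≤ ρ [y, ∞)}` and, by one-sided
continuity of `ρ`, contains its supremum. -/
lemma invFst_eq_sSup (hx0 : 0 < x) (hx1 : x < 1) :
    invFst ρ x = sSup {y | x ≤ ρ.real (Ici y)} := by
  simp only [invFst, exists_extSurv_eq_iff]
  exact IsGreatest.csSup_eq ⟨⟨measureReal_Ioi_sSup_le hx0, le_measureReal_Ici_sSup hx1⟩,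
    fun y hy => le_csSup (bddAbove_setOf_le_measureReal_Ici hx0) hy.2⟩

lemma le_invFst_iff (hx0 : 0 < x) (hx1 : x < 1) : y ≤ invFst ρ x ↔ x ≤ ρ.real (Ici y) := by
  rw [invFst_eq_sSup hx0 hx1]
  exact ⟨fun hy => (le_measureReal_Ici_sSup hx1).trans (measureReal_mono (Ici_subset_Ici.2 hy)),
    fun hy => le_csSup (bddAbove_setOf_le_measureReal_Ici hx0) hy⟩

lemma measureReal_Ioi_invFst_le (hx0 : 0 < x) (hx1 : x < 1) : ρ.real (Ioi (invFst ρ x)) ≤ x := by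
  rw [invFst_eq_sSup hx0 hx1]
  exact measureReal_Ioi_sSup_le hx0

lemma invFst_le_invFst (hx0 : 0 < x) (hxx' : x ≤ x') (hx'1 : x' < 1) :
    invFst ρ x' ≤ invFst ρ x :=
  (le_invFst_iff hx0 (hxx'.trans_lt hx'1)).2
    (hxx'.trans ((le_invFst_iff (hx0.trans_le hxx') hx'1).1 le_rfl))

lemma lt_invFst_of_lt_measureReal_Ioi (hx0 : 0 < x) (h : x < ρ.real (Ioi t)) : t < invFst ρ x :=
  not_le.1 fun ht => h.not_ge <| (measureReal_mono (Ioi_subset_Ioi ht)).trans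
    (measureReal_Ioi_invFst_le hx0 (h.trans_le measureReal_le_one))

lemma le_measureReal_Ioi_of_lt_invFst (hx0 : 0 < x) (hx1 : x < 1) (h : t < invFst ρ x) :
    x ≤ ρ.real (Ioi t) :=
  ((le_invFst_iff hx0 hx1).1 le_rfl).trans (measureReal_mono (Ici_subset_Ioi.2 h))

lemma invFst_pos (hpos : ρ (Iic 0) = 0) (hx0 : 0 < x) (hx1 : x < 1) : 0 < invFst ρ x := by
  by_contra! h
  have hle : ρ.real (Ioi 0) ≤ x :=
    (measureReal_mono (Ioi_subset_Ioi h)).trans (measureReal_Ioi_invFst_le hx0 hx1)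
  have hone : ρ.real (Ioi 0) = 1 := by
    rw [← compl_Iic, probReal_compl_eq_one_sub measurableSet_Iic, measureReal_def, hpos]
    simp
  linarith

lemma invSnd_mem_Icc_and_extSurv_eq (hx0 : 0 < x) (hx1 : x < 1) :
    invSnd ρ x ∈ Icc (0 : ℝ) 1 ∧ extSurv ρ (invFst ρ x) (invSnd ρ x) = x := by
  set Q := {q ∈ Icc (0 : ℝ) 1 | extSurv ρ (invFst ρ x) q = x}
  have hne : Q.Nonempty := exists_extSurv_eq_iff.2
    ⟨measureReal_Ioi_invFst_le hx0 hx1, (le_invFst_iff hx0 hx1).1 le_rfl⟩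
  have hclosed : IsClosed Q :=
    isClosed_Icc.inter (isClosed_eq (by unfold extSurv; fun_prop) continuous_const)
  exact hclosed.csSup_mem hne ⟨1, fun q hq => hq.1.2⟩

/-- If `ρ₂` had more mass than `ρ₁` beyond `t`, levels `x < x'` strictly between these masses
would give `Ŝ₁⁻¹(x) ≤ t < Ŝ₂⁻¹(x')`. -/
lemma measureReal_Ioi_le_of_invFst_le {ρ₁ ρ₂ : Measure ℝ} [IsProbabilityMeasure ρ₁]
    [IsProbabilityMeasure ρ₂]
    (h : ∀ x x', 0 < x → x < x' → x' < 1 → invFst ρ₂ x' ≤ invFst ρ₁ x) (t : ℝ) :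
    ρ₂.real (Ioi t) ≤ ρ₁.real (Ioi t) := by
  by_contra! hc
  obtain ⟨x, hx₁, hx⟩ := exists_between hc
  obtain ⟨x', hxx', hx'₂⟩ := exists_between hx
  have hx0 : 0 < x := measureReal_nonneg.trans_lt hx₁
  have hx'1 : x' < 1 := hx'₂.trans_le measureReal_le_one
  have h₂ : t < invFst ρ₂ x' := lt_invFst_of_lt_measureReal_Ioi (hx0.trans hxx') hx'₂
  have h₁ : invFst ρ₁ x ≤ t := not_lt.1 fun ht =>
    (le_measureReal_Ioi_of_lt_invFst hx0 (hxx'.trans hx'1) ht).not_gt hx₁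
  exact ((h x x' hx0 hxx' hx'1).trans h₁).not_gt h₂

end Quantile

section SizeBiased

variable {ν : Measure ℝ} {m a b y y' q q' : ℝ} {s : Set ℝ}

lemma ae_pos_of_measure_Iic_zero (hpos : ν (Iic 0) = 0) : ∀ᵐ t ∂ν, 0 < t :=
  (measure_eq_zero_iff_ae_notMem.1 hpos).mono fun _ ht => not_le.1 ht

lemma integral_id_pos [NeZero ν] (hpos : ν (Iic 0) = 0) (hint : Integrable id ν) :
    0 < ∫ t, t ∂ν := by
  refine (integral_pos_iff_support_of_nonneg_ae
    ((ae_pos_of_measure_Iic_zero hpos).mono fun t ht => ht.le) hint).2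
    (pos_iff_ne_zero.2 fun h => ?_)
  obtain ⟨t, ht0, ht⟩ :=
    ((ae_pos_of_measure_Iic_zero hpos).and (measure_eq_zero_iff_ae_notMem.1 h)).exists
  simp only [Function.mem_support, ne_eq, not_not] at ht
  exact ht0.ne' ht

lemma isProbabilityMeasure_sizeBiased [NeZero ν] (hpos : ν (Iic 0) = 0)
    (hint : Integrable id ν) (hm : ∫ t, t ∂ν = m) : IsProbabilityMeasure (sizeBiased ν m) := by
  have hm0 : 0 < m := hm ▸ integral_id_pos hpos hint
  constructor
  rw [sizeBiased, withDensity_apply _ MeasurableSet.univ, Measure.restrict_univ,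
    ← ofReal_integral_eq_lintegral_ofReal (f := fun t => t / m) (hint.div_const m)
      ((ae_pos_of_measure_Iic_zero hpos).mono fun t ht => div_nonneg ht.le hm0.le),
    integral_div, hm, div_self hm0.ne', ENNReal.ofReal_one]

lemma sizeBiased_Iic_zero (hpos : ν (Iic 0) = 0) : sizeBiased ν m (Iic 0) = 0 := by
  rw [sizeBiased, withDensity_apply _ measurableSet_Iic]
  exact setLIntegral_measure_zero _ _ hpos

lemma mul_measureReal_sizeBiased_mem_Icc [IsFiniteMeasure ν] (hm : 0 < m) (ha : 0 ≤ a)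
    (hab : a ≤ b) (hs : MeasurableSet s) (hsub : s ⊆ Icc a b) :
    m * (sizeBiased ν m).real s ∈ Icc (a * ν.real s) (b * ν.real s) := by
  have hlow : ENNReal.ofReal (a / m) * ν s ≤ sizeBiased ν m s := by
    rw [sizeBiased, withDensity_apply _ hs, ← setLIntegral_const]
    exact setLIntegral_mono (by fun_prop) fun t ht =>
      ENNReal.ofReal_le_ofReal (div_le_div_of_nonneg_right (hsub ht).1 hm.le)
  have hup : sizeBiased ν m s ≤ ENNReal.ofReal (b / m) * ν s := by
    rw [sizeBiased, withDensity_apply _ hs, ← setLIntegral_const]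
    exact setLIntegral_mono (by fun_prop) fun t ht =>
      ENNReal.ofReal_le_ofReal (div_le_div_of_nonneg_right (hsub ht).2 hm.le)
  have hfin : sizeBiased ν m s ≠ ⊤ := ne_top_of_le_ne_top (by finiteness) hup
  have hlow' := ENNReal.toReal_mono hfin hlow
  have hup' := ENNReal.toReal_mono (by finiteness) hup
  rw [ENNReal.toReal_mul, ENNReal.toReal_ofReal (div_nonneg ha hm.le), ← measureReal_def,
    ← measureReal_def, div_mul_eq_mul_div, div_le_iff₀ hm] at hlow'
  rw [ENNReal.toReal_mul, ENNReal.toReal_ofReal (div_nonneg (ha.trans hab) hm.le),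
    ← measureReal_def, ← measureReal_def, div_mul_eq_mul_div, le_div_iff₀ hm] at hup'
  constructor <;> linarith

lemma mul_measureReal_sizeBiased_singleton [IsFiniteMeasure ν] (hm : 0 < m) (hy : 0 ≤ y) :
    m * (sizeBiased ν m).real {y} = y * ν.real {y} :=
  have h := mul_measureReal_sizeBiased_mem_Icc (ν := ν) hm hy le_rfl (measurableSet_singleton y)
    (by simp)
  le_antisymm h.2 h.1

lemma mul_extSurv_sizeBiased_sub_mem_Icc [IsFiniteMeasure ν] [IsFiniteMeasure (sizeBiased ν m)]
    (hm : 0 < m) (hy : 0 ≤ y) (hyy' : y ≤ y') (hq : q ∈ Icc (0 : ℝ) 1) (hq' : q' ∈ Icc (0 : ℝ) 1) :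
    m * (extSurv (sizeBiased ν m) y q - extSurv (sizeBiased ν m) y' q') ∈
      Icc (y * (extSurv ν y q - extSurv ν y' q')) (y' * (extSurv ν y q - extSurv ν y' q')) := by
  rcases hyy'.eq_or_lt with rfl | hlt
  · have hdiff (μ : Measure ℝ) : extSurv μ y q - extSurv μ y q' = (q' - q) * μ.real {y} := by
      rw [extSurv_eq, extSurv_eq]; ring
    have h : m * ((q' - q) * (sizeBiased ν m).real {y}) = y * ((q' - q) * ν.real {y}) := by
      rw [mul_left_comm, mul_measureReal_sizeBiased_singleton hm hy, mul_left_comm]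
    rw [hdiff, hdiff, h]
    exact ⟨le_rfl, le_rfl⟩
  · have hy' := hy.trans hyy'
    rw [extSurv_sub_extSurv_of_lt hlt, extSurv_sub_extSurv_of_lt hlt]
    have hA := mul_measureReal_sizeBiased_singleton (ν := ν) hm hy
    have hB := mul_measureReal_sizeBiased_singleton (ν := ν) hm hy'
    have hP := mul_measureReal_sizeBiased_mem_Icc (ν := ν) hm hy hyy' measurableSet_Ioo
      Ioo_subset_Icc_self
    have hB0 : 0 ≤ ν.real {y'} := measureReal_nonneg
    have hA0 : 0 ≤ ν.real {y} := measureReal_nonneg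
    obtain ⟨hq0, hq1⟩ := hq
    obtain ⟨hq'0, hq'1⟩ := hq'
    constructor <;> nlinarith [hP.1, hP.2, mul_nonneg hq'0 (mul_nonneg (sub_nonneg.2 hyy') hB0),
      mul_nonneg (sub_nonneg.2 hq1) (mul_nonneg (sub_nonneg.2 hyy') hA0)]

lemma withDensity_sizeBiased (hm : 0 < m) (hpos : ν (Iic 0) = 0) :
    (sizeBiased ν m).withDensity (fun t => ENNReal.ofReal (m / t)) = ν := by
  rw [sizeBiased, ← withDensity_mul _ (by fun_prop) (by fun_prop)]
  have hone : ((fun t => ENNReal.ofReal (t / m)) * fun t => ENNReal.ofReal (m / t)) =ᵐ[ν] 1 := by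
    filter_upwards [ae_pos_of_measure_Iic_zero hpos] with t ht
    rw [Pi.mul_apply, ← ENNReal.ofReal_mul (div_nonneg ht.le hm.le),
      div_mul_div_cancel₀ hm.ne', div_self ht.ne', Pi.one_apply, ENNReal.ofReal_one]
  rw [withDensity_congr_ae hone, withDensity_one]

end SizeBiased

section SbRatio

variable {ν ν₁ ν₂ : Measure ℝ} {m x x' : ℝ}

lemma mul_sub_mem_Icc_invFst_mul_sbRatio_sub [IsFiniteMeasure ν]
    [IsProbabilityMeasure (sizeBiased ν m)] (hm : 0 < m) (hpos : ν (Iic 0) = 0) (hx0 : 0 < x)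
    (hxx' : x < x') (hx'1 : x' < 1) :
    m * (x' - x) ∈ Icc (invFst (sizeBiased ν m) x' * (sbRatio ν m x' - sbRatio ν m x))
      (invFst (sizeBiased ν m) x * (sbRatio ν m x' - sbRatio ν m x)) := by
  obtain ⟨hq', hS'⟩ := invSnd_mem_Icc_and_extSurv_eq (ρ := sizeBiased ν m) (hx0.trans hxx') hx'1
  obtain ⟨hq, hS⟩ := invSnd_mem_Icc_and_extSurv_eq (ρ := sizeBiased ν m) hx0 (hxx'.trans hx'1)
  have h := mul_extSurv_sizeBiased_sub_mem_Icc (ν := ν) hm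
    (invFst_pos (sizeBiased_Iic_zero (m := m) hpos) (hx0.trans hxx') hx'1).le
    (invFst_le_invFst hx0 hxx'.le hx'1) hq' hq
  rwa [hS, hS'] at h

lemma invFst_sizeBiased_le_of_sbRatio_eq [IsFiniteMeasure ν₁] [IsFiniteMeasure ν₂]
    [IsProbabilityMeasure (sizeBiased ν₁ m)] [IsProbabilityMeasure (sizeBiased ν₂ m)]
    (hm : 0 < m) (hpos₁ : ν₁ (Iic 0) = 0) (hpos₂ : ν₂ (Iic 0) = 0)
    (hrx : sbRatio ν₁ m x = sbRatio ν₂ m x) (hrx' : sbRatio ν₁ m x' = sbRatio ν₂ m x')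
    (hx0 : 0 < x) (hxx' : x < x') (hx'1 : x' < 1) :
    invFst (sizeBiased ν₂ m) x' ≤ invFst (sizeBiased ν₁ m) x := by
  have h₁ := (mul_sub_mem_Icc_invFst_mul_sbRatio_sub hm hpos₁ hx0 hxx' hx'1).2
  have h₂ := (mul_sub_mem_Icc_invFst_mul_sbRatio_sub hm hpos₂ hx0 hxx' hx'1).1
  rw [← hrx, ← hrx'] at h₂
  have hΔ : 0 < sbRatio ν₁ m x' - sbRatio ν₁ m x :=
    pos_of_mul_pos_right ((mul_pos hm (sub_pos.2 hxx')).trans_le h₁)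
      (invFst_pos (sizeBiased_Iic_zero hpos₁) hx0 (hxx'.trans hx'1)).le
  exact le_of_mul_le_mul_right (h₂.trans h₁) hΔ

lemma measureReal_Ioi_sizeBiased_le_of_sbRatio_eq [IsFiniteMeasure ν₁] [IsFiniteMeasure ν₂]
    [IsProbabilityMeasure (sizeBiased ν₁ m)] [IsProbabilityMeasure (sizeBiased ν₂ m)]
    (hm : 0 < m) (hpos₁ : ν₁ (Iic 0) = 0) (hpos₂ : ν₂ (Iic 0) = 0)
    (hr : ∀ x ∈ Ioo (0 : ℝ) 1, sbRatio ν₁ m x = sbRatio ν₂ m x) (t : ℝ) :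
    (sizeBiased ν₂ m).real (Ioi t) ≤ (sizeBiased ν₁ m).real (Ioi t) :=
  measureReal_Ioi_le_of_invFst_le (fun _ _ hx0 hxx' hx'1 =>
    invFst_sizeBiased_le_of_sbRatio_eq hm hpos₁ hpos₂ (hr _ ⟨hx0, hxx'.trans hx'1⟩)
      (hr _ ⟨hx0.trans hxx', hx'1⟩) hx0 hxx' hx'1) t

end SbRatio

lemma ext_of_measureReal_Ioi {μ ν : Measure ℝ} [IsProbabilityMeasure μ] [IsProbabilityMeasure ν]
    (h : ∀ t, μ.real (Ioi t) = ν.real (Ioi t)) : μ = ν :=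
  Measure.ext_of_Iic μ ν fun t => by
    rw [← compl_Ioi, ← ofReal_measureReal, ← ofReal_measureReal,
      probReal_compl_eq_one_sub measurableSet_Ioi, probReal_compl_eq_one_sub measurableSet_Ioi, h]

end SizeBias

open SizeBias

/-- If two probability measures on `(0, ∞)` have the same finite first moment and the
same size-bias ratio function on `[0, 1]`, then they are equal. -/
theorem sbRatio_determines_measure (ν₁ ν₂ : Measure ℝ)
    [IsProbabilityMeasure ν₁] [IsProbabilityMeasure ν₂]
    (hpos₁ : ν₁ (Set.Iic 0) = 0) (hpos₂ : ν₂ (Set.Iic 0) = 0)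
    (hint₁ : Integrable id ν₁) (hint₂ : Integrable id ν₂)
    (m : ℝ) (hm₁ : ∫ x, x ∂ν₁ = m) (hm₂ : ∫ x, x ∂ν₂ = m)
    (hr : ∀ x ∈ Set.Icc (0 : ℝ) 1, sbRatio ν₁ m x = sbRatio ν₂ m x) :
    ν₁ = ν₂ := by
  have hm : 0 < m := hm₁ ▸ integral_id_pos hpos₁ hint₁
  have := isProbabilityMeasure_sizeBiased hpos₁ hint₁ hm₁
  have := isProbabilityMeasure_sizeBiased hpos₂ hint₂ hm₂
  have hr₁₂ : ∀ x ∈ Ioo (0 : ℝ) 1, sbRatio ν₁ m x = sbRatio ν₂ m x :=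
    fun x hx => hr x (Ioo_subset_Icc_self hx)
  have hsb : sizeBiased ν₁ m = sizeBiased ν₂ m := ext_of_measureReal_Ioi fun t => le_antisymm
    (measureReal_Ioi_sizeBiased_le_of_sbRatio_eq hm hpos₂ hpos₁ (fun x hx => (hr₁₂ x hx).symm) t)
    (measureReal_Ioi_sizeBiased_le_of_sbRatio_eq hm hpos₁ hpos₂ hr₁₂ t)
  rw [← withDensity_sizeBiased hm hpos₁, hsb, withDensity_sizeBiased hm hpos₂]
end
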